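/- arXiv:1702.08664 — 3 statements merged into one kernel-verified Lean document; each statement's English description precedes it below -/
import Mathlib

section
/- Let P and Q be polynomials in K[x_1,...,x_n] and T an irregular triangular set such that prem(P, T) = 0 and prem(Q, T) = 0. It is not true in general that prem(P + Q, T) = 0; i.e., the set {F : prem(F, T) = 0} need not be closed under addition for arbitrary (irregular) triangular sets T. Concretely, a triangular set T is regular if and only if {F : prem(F, T) = 0} = sat(T) (which is an ideal), so for irregular T the set {F : prem(F, T) = 0} strictly contains or differs from sat(T) and can fail additivity. -/
open MvPolynomial

namespace CharDec

variable {K : Type*} [Field K] {σ : Type*} [LinearOrder σ]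

/-- Lexicographic comparison of exponent vectors (larger variables dominate):
`a ≤ b` iff `a = b` or at the greatest index where they differ, `a` is smaller. -/
def lexLe (a b : σ →₀ ℕ) : Prop :=
  a = b ∨ ∃ i : σ, a i < b i ∧ ∀ j : σ, i < j → a j = b j

/-- `m` is the leading monomial of `f` with respect to the lex term ordering. -/
def IsLeadMon (f : MvPolynomial σ K) (m : σ →₀ ℕ) : Prop :=
  m ∈ f.support ∧ ∀ m' ∈ f.support, lexLe m' m

/-- `f` has leading (greatest actually occurring) variable `i`. -/
def HasLV (f : MvPolynomial σ K) (i : σ) : Prop :=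
  i ∈ f.vars ∧ ∀ j ∈ f.vars, j ≤ i

/-- The coefficient of `(X i) ^ d` in `f`, as a polynomial in the remaining variables. -/
noncomputable def coeffWrt (i : σ) (d : ℕ) (f : MvPolynomial σ K) :
    MvPolynomial σ K :=
  ∑ m ∈ f.support.filter (fun m => m i = d), monomial (m.update i 0) (f.coeff m)

/-- The initial (leading coefficient in the leading variable) of `f` with
respect to the variable `i`. -/
noncomputable def initialWrt (i : σ) (f : MvPolynomial σ K) : MvPolynomial σ K :=
  coeffWrt i (f.degreeOf i) f

/-- `R` is the pseudo-remainder of `P` on pseudo-division by `Q` with respect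
to the variable `y` (classical pseudo-division, with the exponent
`deg P - deg Q + 1` when `deg P ≥ deg Q`, and `0` otherwise). -/
def IsPrem (y : σ) (Q P R : MvPolynomial σ K) : Prop :=
  ∃ A : MvPolynomial σ K,
    (initialWrt y Q) ^ (P.degreeOf y + 1 - Q.degreeOf y) * P = A * Q + R ∧
    R.degreeOf y < Q.degreeOf y

/-- `IterPrem P L R` : `R` is the iterated pseudo-remainder of `P` by the
list `L` of pairs (leading variable, divisor), divisors being used from the
head of the list on. -/
def IterPrem : MvPolynomial σ K → List (σ × MvPolynomial σ K) →
    MvPolynomial σ K → Prop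
  | P, [], R => R = P
  | P, e :: L, R => ∃ S, IsPrem e.1 e.2 P S ∧ IterPrem S L R

/-- A triangular set: a list of (leading variable, polynomial) pairs with
strictly increasing leading variables. -/
structure TriSet (K : Type*) [Field K] (σ : Type*) [LinearOrder σ] where
  elems : List (σ × MvPolynomial σ K)
  sorted : elems.Pairwise (fun e e' => e.1 < e'.1)
  hlv : ∀ e ∈ elems, HasLV e.2 e.1

namespace TriSet

/-- The list of leading variables of a triangular set. -/
def lvs (T : TriSet K σ) : List σ := T.elems.map Prod.fst

/-- The list of polynomials of a triangular set. -/
def polys (T : TriSet K σ) : List (MvPolynomial σ K) := T.elems.map Prod.snd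

/-- A variable is a parameter of `T` if it is not a leading variable of `T`. -/
def IsParam (T : TriSet K σ) (j : σ) : Prop := j ∉ T.lvs

/-- `T` is normal: every initial involves only the parameters of `T`. -/
def Normal (T : TriSet K σ) : Prop :=
  ∀ e ∈ T.elems, ∀ j ∈ (initialWrt e.1 e.2).vars, T.IsParam j

/-- `T` is zero-dimensional: every variable is a leading variable of `T`. -/
def ZeroDim (T : TriSet K σ) : Prop := ∀ i : σ, i ∈ T.lvs

/-- The product of the initials of `T`. -/
noncomputable def prodInit (T : TriSet K σ) : MvPolynomial σ K :=
  (T.elems.map fun e => initialWrt e.1 e.2).prod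

/-- The ideal generated by the polynomials of `T`. -/
noncomputable def ideal (T : TriSet K σ) : Ideal (MvPolynomial σ K) :=
  Ideal.span {p | ∃ e ∈ T.elems, p = e.2}

end TriSet

/-- The saturation `I : J^∞` of an ideal `I` by an element `J`. -/
def satBy (I : Ideal (MvPolynomial σ K)) (J : MvPolynomial σ K) :
    Ideal (MvPolynomial σ K) where
  carrier := {p | ∃ k : ℕ, J ^ k * p ∈ I}
  zero_mem' := ⟨0, by simp⟩
  add_mem' := by
    rintro a b ⟨k, hk⟩ ⟨l, hl⟩
    refine ⟨k + l, ?_⟩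
    have h : J ^ (k + l) * (a + b) = J ^ l * (J ^ k * a) + J ^ k * (J ^ l * b) := by ring
    rw [h]
    exact add_mem (Ideal.mul_mem_left _ _ hk) (Ideal.mul_mem_left _ _ hl)
  smul_mem' := by
    rintro c a ⟨k, hk⟩
    refine ⟨k, ?_⟩
    have h : J ^ k * (c • a) = c * (J ^ k * a) := by rw [smul_eq_mul]; ring
    rw [h]
    exact Ideal.mul_mem_left _ _ hk

namespace TriSet

/-- The saturated ideal `sat(T) = ⟨T⟩ : (∏ initials)^∞` of a triangular set. -/
noncomputable def sat (T : TriSet K σ) : Ideal (MvPolynomial σ K) :=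
  satBy T.ideal T.prodInit

/-- The triangular set formed by the first `i` elements of `T`. -/
def take (T : TriSet K σ) (i : ℕ) : TriSet K σ :=
  ⟨T.elems.take i, T.sorted.sublist (List.take_sublist i T.elems),
    fun e he => T.hlv e (List.mem_of_mem_take he)⟩

/-- `T` is a regular set: each initial is neither zero nor a zero-divisor
modulo the saturated ideal of the preceding subset. -/
def Regular (T : TriSet K σ) : Prop :=
  ∀ i : ℕ, ∀ h : i < T.elems.length,
    initialWrt (T.elems.get ⟨i, h⟩).1 (T.elems.get ⟨i, h⟩).2 ∉ (T.take i).sat ∧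
    ∀ p : MvPolynomial σ K,
      initialWrt (T.elems.get ⟨i, h⟩).1 (T.elems.get ⟨i, h⟩).2 * p ∈ (T.take i).sat →
        p ∈ (T.take i).sat

end TriSet

/-- The zero set, in (the algebraic closure of `K`)^σ, of a set of polynomials. -/
def zeroSet (S : Set (MvPolynomial σ K)) : Set (σ → AlgebraicClosure K) :=
  {x | ∀ p ∈ S, aeval x p = 0}

/-- `Zero(T / ini(T))` : the common zeros of `T` at which no initial of `T` vanishes. -/
def TriSet.zeroQuasi (T : TriSet K σ) : Set (σ → AlgebraicClosure K) :=
  {x | (∀ e ∈ T.elems, aeval x e.2 = 0) ∧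
       (∀ e ∈ T.elems, aeval x (initialWrt e.1 e.2) ≠ 0)}

/-- `G` is a (finite) Gröbner basis of `I` with respect to the lex term
ordering: `G ⊆ I` and the leading monomial of every nonzero element of `I` is
divisible by the leading monomial of some element of `G`. -/
def IsGB (G : Set (MvPolynomial σ K)) (I : Ideal (MvPolynomial σ K)) : Prop :=
  G.Finite ∧ G ⊆ ↑I ∧
  ∀ f ∈ I, f ≠ 0 → ∃ g ∈ G, ∃ mf mg, IsLeadMon f mf ∧ IsLeadMon g mg ∧ ∀ j, mg j ≤ mf j

/-- `G` is the reduced lex Gröbner basis of `I`. -/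
def IsReducedGB (G : Set (MvPolynomial σ K)) (I : Ideal (MvPolynomial σ K)) : Prop :=
  IsGB G I ∧ (0 : MvPolynomial σ K) ∉ G ∧
  (∀ g ∈ G, ∀ m, IsLeadMon g m → g.coeff m = 1) ∧
  (∀ g ∈ G, ∀ g' ∈ G, g' ≠ g → ∀ m ∈ g.support, ∀ m', IsLeadMon g' m' →
    ¬ (∀ j, m' j ≤ m j))

/-- `C` is the W-characteristic set extracted from the (reduced lex Gröbner
basis) `G`: for each leading variable occurring in `G`, `C` contains the
lex-minimal element of `G` with that leading variable. -/
def IsWCharOf (C : TriSet K σ) (G : Set (MvPolynomial σ K)) : Prop :=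
  (∀ e ∈ C.elems, e.2 ∈ G ∧
    ∀ g ∈ G, HasLV g e.1 → ∀ mg me, IsLeadMon g mg → IsLeadMon e.2 me → lexLe me mg) ∧
  (∀ g ∈ G, ∀ i : σ, HasLV g i → i ∈ C.lvs)

/-- The Sylvester-style matrix of two univariate polynomials. -/
noncomputable def sylvester {R : Type*} [CommRing R] (f g : Polynomial R) :
    Matrix (Fin (f.natDegree + g.natDegree)) (Fin (f.natDegree + g.natDegree)) R :=
  Matrix.of fun i j =>
    if (i : ℕ) < g.natDegree then
      (if (i : ℕ) ≤ (j : ℕ) then f.coeff ((j : ℕ) - (i : ℕ)) else 0)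
    else
      (if (i : ℕ) - g.natDegree ≤ (j : ℕ) then g.coeff ((j : ℕ) - ((i : ℕ) - g.natDegree))
       else 0)

/-- The resultant of two univariate polynomials, as the determinant of their
Sylvester matrix. -/
noncomputable def resultantP {R : Type*} [CommRing R] (f g : Polynomial R) : R :=
  (sylvester f g).det

/-- View a multivariate polynomial as a univariate polynomial in the variable `i`. -/
noncomputable def toUni (i : σ) (f : MvPolynomial σ K) :
    Polynomial (MvPolynomial σ K) :=
  aeval (fun j => if j = i then Polynomial.X else Polynomial.C (X j)) f

/-- The resultant of two multivariate polynomials with respect to the variable `i`. -/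
noncomputable def resWrt (i : σ) (f g : MvPolynomial σ K) : MvPolynomial σ K :=
  resultantP (toUni i f) (toUni i g)

/-- The iterated resultant of `f` with respect to a list of
(leading variable, divisor) pairs, used from the head of the list on. -/
noncomputable def iterRes : MvPolynomial σ K → List (σ × MvPolynomial σ K) →
    MvPolynomial σ K
  | f, [] => f
  | f, e :: L => iterRes (resWrt e.1 f e.2) L

end CharDec

/-!
Pseudo-division by `T` multiplies by powers of initials, which divide powers of the product of
all initials, and subtracts multiples of elements of `T`; so it preserves membership in `sat(T)`
in both directions, and `prem(F, T) = 0` always gives `F ∈ sat(T)`.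

Conversely, let `T` be regular and `p` an element of `sat(T₁, …, Tᵢ₊₁)` of lower degree than
`Tᵢ₊₁` in its leading variable `y`. Read polynomials as univariate polynomials in `y` with
coefficients modulo `sat(T₁, …, Tᵢ)`, an ideal free of `y` and hence stable under taking
coefficients in `y`. There `Tᵢ₊₁` has a regular leading coefficient, so it divides no nonzero
polynomial of lower degree, and `p ∈ sat(T₁, …, Tᵢ)`. By induction a reduced element of `sat(T)`
is `0`, so every element of `sat(T)` has pseudo-remainder `0`.

If `T` is irregular at step `i`, either `ini(Tᵢ₊₁) ∈ sat(T₁, …, Tᵢ)` and `1 ∈ sat(T)`, or some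
`p ∉ sat(T₁, …, Tᵢ)` has `ini(Tᵢ₊₁) p ∈ sat(T₁, …, Tᵢ)`; reducing `p` by `T₁, …, Tᵢ` and then
taking coefficients in the later leading variables yields a nonzero element of `sat(T)` that is
its own pseudo-remainder.

For `T = [x₁², x₁x₂ + x₀]` the polynomials `x₁x₂ + x₀` and `x₁ - (x₁x₂ + x₀)` have
pseudo-remainder `0` while their sum `x₁` is reduced; as the polynomials with zero
pseudo-remainder form the ideal `sat(T)` when `T` is regular, `T` is irregular.
-/

theorem Polynomial.eq_zero_of_natDegree_mul_lt {A : Type*} [CommRing A] {a b : Polynomial A}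
    {d : ℕ} (hb : b.natDegree ≤ d) (hreg : ∀ x, x * b.coeff d = 0 → x = 0)
    (h : (a * b).natDegree < d) : a = 0 := by
  by_contra ha
  have hcoeff := Polynomial.coeff_mul_add_eq_of_natDegree_le (le_refl a.natDegree) hb
  rw [Polynomial.coeff_eq_zero_of_natDegree_lt (by omega)] at hcoeff
  exact ha (Polynomial.leadingCoeff_eq_zero.mp (hreg _ hcoeff.symm))

theorem Ideal.mem_of_pow_mul_mem {R : Type*} [CommRing R] {I : Ideal R} {h : R}
    (hreg : ∀ q, h * q ∈ I → q ∈ I) (k : ℕ) {p : R} (hp : h ^ k * p ∈ I) : p ∈ I := by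
  induction k generalizing p with
  | zero => rwa [pow_zero, one_mul] at hp
  | succ k ih => exact hreg p (ih (by rwa [← mul_assoc, ← pow_succ]))

theorem MvPolynomial.degreeOf_mul_eq_zero {R σ : Type*} [CommSemiring R] {z : σ}
    {a b : MvPolynomial σ R} (ha : degreeOf z a = 0) (hb : degreeOf z b = 0) :
    degreeOf z (a * b) = 0 :=
  Nat.le_zero.mp ((degreeOf_mul_le ..).trans (by rw [ha, hb]))

theorem MvPolynomial.degreeOf_pow_eq_zero {R σ : Type*} [CommSemiring R] {z : σ}
    {a : MvPolynomial σ R} (ha : degreeOf z a = 0) (k : ℕ) : degreeOf z (a ^ k) = 0 :=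
  Nat.le_zero.mp ((degreeOf_pow_le ..).trans (by rw [ha, mul_zero]))

theorem MvPolynomial.degreeOf_list_prod_eq_zero {R σ : Type*} [CommSemiring R] {z : σ}
    {l : List (MvPolynomial σ R)} (h : ∀ a ∈ l, degreeOf z a = 0) : degreeOf z l.prod = 0 := by
  induction l with
  | nil => simp
  | cons a l ih =>
    rw [List.prod_cons]
    exact degreeOf_mul_eq_zero (h a List.mem_cons_self)
      (ih fun b hb => h b (List.mem_cons_of_mem a hb))

theorem MvPolynomial.eq_zero_of_dvd_of_degreeOf_lt {R σ : Type*} [CommSemiring R]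
    [NoZeroDivisors R] {y : σ} {Q P : MvPolynomial σ R} (hdvd : Q ∣ P)
    (hdeg : degreeOf y P < degreeOf y Q) : P = 0 := by
  obtain ⟨A, rfl⟩ := hdvd
  by_contra h
  rw [degreeOf_mul_eq (left_ne_zero_of_mul h) (right_ne_zero_of_mul h)] at hdeg
  omega

namespace CharDec

open MvPolynomial

variable {K : Type*} [Field K] {σ : Type*}

section Coefficients

theorem coeff_coeffWrt (i : σ) (d : ℕ) (f : MvPolynomial σ K) (m : σ →₀ ℕ) :
    coeff m (coeffWrt i d f) = if m i = 0 then coeff (m.update i d) f else 0 := by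
  classical
  rw [coeffWrt, coeff_sum]
  simp_rw [coeff_monomial]
  split_ifs with hm
  · rw [Finset.sum_eq_single (m.update i d)]
    · rw [if_pos (by rw [Finsupp.update_idem, ← hm, Finsupp.update_self])]
    · intro b hb hne
      refine if_neg fun hbm => hne ?_
      rw [← hbm, Finsupp.update_idem, ← (Finset.mem_filter.mp hb).2, Finsupp.update_self]
    · intro hnm
      rw [if_pos (by rw [Finsupp.update_idem, ← hm, Finsupp.update_self])]
      by_contra hc
      exact hnm (Finset.mem_filter.mpr ⟨mem_support_iff.mpr hc, by simp⟩)
  · refine Finset.sum_eq_zero fun b _ => if_neg fun hbm => hm ?_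
    simp [← hbm]

theorem mem_support_coeffWrt {i : σ} {d : ℕ} {f : MvPolynomial σ K} {m : σ →₀ ℕ}
    (hm : m ∈ (coeffWrt i d f).support) : m i = 0 ∧ m.update i d ∈ f.support := by
  rw [mem_support_iff, coeff_coeffWrt] at hm
  split_ifs at hm with h
  · exact ⟨h, mem_support_iff.mpr hm⟩
  · exact absurd rfl hm

theorem degreeOf_coeffWrt_self (i : σ) (d : ℕ) (f : MvPolynomial σ K) :
    degreeOf i (coeffWrt i d f) = 0 :=
  Nat.le_zero.mp <| degreeOf_le_iff.mpr fun _ hm => (mem_support_coeffWrt hm).1.le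

theorem degreeOf_coeffWrt_le (i z : σ) (d : ℕ) (f : MvPolynomial σ K) :
    degreeOf z (coeffWrt i d f) ≤ degreeOf z f := by
  classical
  refine degreeOf_le_iff.mpr fun m hm => ?_
  obtain ⟨hmi, hmem⟩ := mem_support_coeffWrt hm
  have := monomial_le_degreeOf z hmem
  by_cases hz : z = i
  · subst hz; omega
  · rwa [Finsupp.update_apply, if_neg hz] at this

theorem degreeOf_initialWrt_self (i : σ) (f : MvPolynomial σ K) :
    degreeOf i (initialWrt i f) = 0 :=
  degreeOf_coeffWrt_self ..

theorem degreeOf_initialWrt_eq_zero (i : σ) {z : σ} {f : MvPolynomial σ K}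
    (h : degreeOf z f = 0) : degreeOf z (initialWrt i f) = 0 :=
  Nat.le_zero.mp ((degreeOf_coeffWrt_le ..).trans h.le)

theorem coeffWrt_eq_zero_of_degreeOf_lt {i : σ} {d : ℕ} {f : MvPolynomial σ K}
    (h : degreeOf i f < d) : coeffWrt i d f = 0 := by
  classical
  ext m
  rw [coeff_coeffWrt, coeff_zero]
  split_ifs
  · exact notMem_support_iff.mp (notMem_support_of_degreeOf_lt i (by simpa using h))
  · rfl

theorem initialWrt_ne_zero {i : σ} {f : MvPolynomial σ K} (hf : f ≠ 0) :
    initialWrt i f ≠ 0 := by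
  classical
  obtain ⟨m, hm, hmax⟩ := f.support.exists_max_image (· i) (support_nonempty.mpr hf)
  have hdeg : degreeOf i f = m i :=
    le_antisymm (degreeOf_le_iff.mpr hmax) (monomial_le_degreeOf i hm)
  intro h0
  have := congrArg (coeff (m.update i 0)) h0
  rw [initialWrt, coeff_coeffWrt, if_pos (by simp), Finsupp.update_idem,
    hdeg, Finsupp.update_self, coeff_zero] at this
  exact mem_support_iff.mp hm this

end Coefficients

section Saturation

theorem mem_satBy_of_mem {I : Ideal (MvPolynomial σ K)} {J p : MvPolynomial σ K} (hp : p ∈ I) :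
    p ∈ satBy I J :=
  ⟨0, by rwa [pow_zero, one_mul]⟩

theorem mem_satBy_of_dvd_pow_of_mul_mem {I : Ideal (MvPolynomial σ K)} {J g p : MvPolynomial σ K}
    {N : ℕ} (hg : g ∣ J ^ N) (h : g * p ∈ satBy I J) : p ∈ satBy I J := by
  obtain ⟨w, hw⟩ := hg
  obtain ⟨k, hk⟩ := h
  refine ⟨k + N, ?_⟩
  rw [pow_add, hw, show J ^ k * (g * w) * p = w * (J ^ k * (g * p)) by ring]
  exact Ideal.mul_mem_left _ _ hk

end Saturation

section PseudoRemainder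

theorem IsPrem.unique {y : σ} {Q P R R' : MvPolynomial σ K} (h : IsPrem y Q P R)
    (h' : IsPrem y Q P R') : R = R' := by
  obtain ⟨A, hA, hR⟩ := h
  obtain ⟨A', hA', hR'⟩ := h'
  refine sub_eq_zero.mp (eq_zero_of_dvd_of_degreeOf_lt (y := y) (Q := Q) ⟨A' - A, ?_⟩ ?_)
  · linear_combination hA' - hA
  · exact (degreeOf_sub_le y R R').trans_lt (max_lt hR hR')

theorem isPrem_of_degreeOf_lt {y : σ} {Q P : MvPolynomial σ K}
    (h : degreeOf y P < degreeOf y Q) : IsPrem y Q P P :=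
  ⟨0, by rw [Nat.sub_eq_zero_of_le h, pow_zero]; ring, h⟩

theorem isPrem_self {y : σ} {Q : MvPolynomial σ K} (h : 0 < degreeOf y Q) : IsPrem y Q Q 0 :=
  ⟨initialWrt y Q, by rw [Nat.add_sub_cancel_left, pow_one, add_zero], by rwa [degreeOf_zero]⟩

theorem IterPrem.unique {L : List (σ × MvPolynomial σ K)} {P R R' : MvPolynomial σ K}
    (h : IterPrem P L R) (h' : IterPrem P L R') : R = R' := by
  induction L generalizing P with
  | nil => exact h.trans h'.symm
  | cons e L ih =>
    obtain ⟨S, hS, hR⟩ := h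
    obtain ⟨S', hS', hR'⟩ := h'
    rw [hS.unique hS'] at hR
    exact ih hR hR'

theorem iterPrem_of_degreeOf_lt {L : List (σ × MvPolynomial σ K)} {P : MvPolynomial σ K}
    (h : ∀ e ∈ L, degreeOf e.1 P < degreeOf e.1 e.2) : IterPrem P L P := by
  induction L with
  | nil => rfl
  | cons e L ih =>
    exact ⟨P, isPrem_of_degreeOf_lt (h e List.mem_cons_self),
      ih fun e' he' => h e' (List.mem_cons_of_mem e he')⟩

theorem IsPrem.mul_mem_satBy_iff {I : Ideal (MvPolynomial σ K)} {J : MvPolynomial σ K} {y : σ}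
    {Q P S : MvPolynomial σ K} (h : IsPrem y Q P S) (hQ : Q ∈ I) (hini : initialWrt y Q ∣ J)
    (x : MvPolynomial σ K) : x * P ∈ satBy I J ↔ x * S ∈ satBy I J := by
  obtain ⟨A, hA, -⟩ := h
  set a := degreeOf y P + 1 - degreeOf y Q
  have hQ' : x * A * Q ∈ satBy I J := mem_satBy_of_mem (Ideal.mul_mem_left _ _ hQ)
  constructor
  · intro hP
    rw [show x * S = initialWrt y Q ^ a * (x * P) - x * A * Q by linear_combination -x * hA]
    exact sub_mem (Ideal.mul_mem_left _ _ hP) hQ'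
  · intro hS
    refine mem_satBy_of_dvd_pow_of_mul_mem (pow_dvd_pow_of_dvd hini a) ?_
    rw [show initialWrt y Q ^ a * (x * P) = x * A * Q + x * S by linear_combination x * hA]
    exact add_mem hQ' hS

theorem IterPrem.mul_mem_satBy_iff {I : Ideal (MvPolynomial σ K)} {J : MvPolynomial σ K}
    {L : List (σ × MvPolynomial σ K)} {P R : MvPolynomial σ K} (h : IterPrem P L R)
    (hL : ∀ e ∈ L, e.2 ∈ I ∧ initialWrt e.1 e.2 ∣ J) (x : MvPolynomial σ K) :
    x * P ∈ satBy I J ↔ x * R ∈ satBy I J := by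
  induction L generalizing P with
  | nil => rw [show R = P from h]
  | cons e L ih =>
    obtain ⟨S, hS, hR⟩ := h
    obtain ⟨he, hini⟩ := hL e List.mem_cons_self
    exact (hS.mul_mem_satBy_iff he hini x).trans
      (ih hR fun e' he' => hL e' (List.mem_cons_of_mem e he'))

end PseudoRemainder

section Univariate

variable [LinearOrder σ]

theorem toUni_X_self (i : σ) : toUni i (X i : MvPolynomial σ K) = Polynomial.X := by
  simp [toUni]

theorem toUni_of_degreeOf_eq_zero {i : σ} {p : MvPolynomial σ K} (h : degreeOf i p = 0) :
    toUni i p = Polynomial.C p := by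
  refine hom_congr_vars (f₁ := (aeval _).toRingHom) (f₂ := Polynomial.C) ?_ (fun j hj _ => ?_) rfl
  · ext a : 1
    simp
  · have hji : j ≠ i := by
      rintro rfl
      exact mem_vars_iff_degreeOf_ne_zero.mp hj h
    simp [hji]

theorem toUni_add (i : σ) (f g : MvPolynomial σ K) : toUni i (f + g) = toUni i f + toUni i g :=
  map_add _ f g

theorem toUni_mul (i : σ) (f g : MvPolynomial σ K) : toUni i (f * g) = toUni i f * toUni i g :=
  map_mul _ f g

theorem toUni_monomial (i : σ) (m : σ →₀ ℕ) (a : K) :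
    toUni i (monomial m a) = Polynomial.C (monomial (m.update i 0) a) * Polynomial.X ^ m i := by
  classical
  have hm : m = m.update i 0 + Finsupp.single i (m i) := by
    ext j
    by_cases hj : j = i <;> simp [hj]
  have hsplit : monomial m a = monomial (m.update i 0) a * X i ^ m i := by
    rw [X_pow_eq_monomial, monomial_mul, mul_one, ← hm]
  have hfree : degreeOf i (monomial (m.update i 0) a) = 0 :=
    Nat.le_zero.mp <| degreeOf_le_iff.mpr fun n hn => by
      rw [Finset.mem_singleton.mp (support_monomial_subset hn)]
      simp
  rw [hsplit, ← toUni_X_self i, ← toUni_of_degreeOf_eq_zero hfree]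
  simp only [toUni, map_mul, map_pow]

theorem coeff_toUni (i : σ) (d : ℕ) (f : MvPolynomial σ K) :
    (toUni i f).coeff d = coeffWrt i d f := by
  classical
  conv_lhs => rw [f.as_sum]
  rw [toUni, map_sum, Polynomial.finsetSum_coeff, coeffWrt, Finset.sum_filter]
  refine Finset.sum_congr rfl fun m _ => ?_
  rw [← toUni, toUni_monomial, Polynomial.coeff_C_mul_X_pow]
  exact if_congr eq_comm rfl rfl

theorem natDegree_toUni (i : σ) (f : MvPolynomial σ K) :
    (toUni i f).natDegree = degreeOf i f := by
  refine le_antisymm (Polynomial.natDegree_le_iff_coeff_eq_zero.mpr fun d hd => ?_) ?_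
  · rw [coeff_toUni]
    exact coeffWrt_eq_zero_of_degreeOf_lt (by exact_mod_cast hd)
  · rcases eq_or_ne f 0 with rfl | hf
    · simp
    · refine Polynomial.le_natDegree_of_ne_zero ?_
      rw [coeff_toUni]
      exact initialWrt_ne_zero hf

theorem leadingCoeff_toUni (i : σ) (f : MvPolynomial σ K) :
    (toUni i f).leadingCoeff = initialWrt i f := by
  rw [Polynomial.leadingCoeff, natDegree_toUni, coeff_toUni, initialWrt]

theorem eval_toUni (i : σ) (f : MvPolynomial σ K) : (toUni i f).eval (X i) = f := by
  induction f using MvPolynomial.induction_on with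
  | C a => simp [toUni]
  | add p q hp hq => rw [toUni_add, Polynomial.eval_add, hp, hq]
  | mul_X p j hp =>
    rw [toUni_mul, Polynomial.eval_mul, hp]
    by_cases hj : j = i <;> simp [toUni, hj]

theorem sum_coeffWrt_mul_X_pow (i : σ) (f : MvPolynomial σ K) :
    ∑ e ∈ Finset.range (degreeOf i f + 1), coeffWrt i e f * X i ^ e = f := by
  conv_rhs => rw [← eval_toUni i f, Polynomial.eval_eq_sum_range, natDegree_toUni]
  simp_rw [coeff_toUni]

theorem coeffWrt_add (i : σ) (d : ℕ) (f g : MvPolynomial σ K) :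
    coeffWrt i d (f + g) = coeffWrt i d f + coeffWrt i d g := by
  simp only [← coeff_toUni, toUni_add, Polynomial.coeff_add]

theorem coeffWrt_sub (i : σ) (d : ℕ) (f g : MvPolynomial σ K) :
    coeffWrt i d (f - g) = coeffWrt i d f - coeffWrt i d g := by
  simp only [← coeff_toUni, toUni, map_sub, Polynomial.coeff_sub]

theorem coeffWrt_mul_left {i : σ} {a : MvPolynomial σ K} (ha : degreeOf i a = 0) (d : ℕ)
    (f : MvPolynomial σ K) : coeffWrt i d (a * f) = a * coeffWrt i d f := by
  rw [← coeff_toUni, toUni_mul, toUni_of_degreeOf_eq_zero ha, Polynomial.coeff_C_mul, coeff_toUni]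

theorem coeffWrt_X_pow_mul (i : σ) (d k : ℕ) (f : MvPolynomial σ K) :
    coeffWrt i d (X i ^ k * f) = if k ≤ d then coeffWrt i (d - k) f else 0 := by
  rw [← coeff_toUni, toUni_mul, show toUni i (X i ^ k : MvPolynomial σ K) = Polynomial.X ^ k by
    simp [toUni], Polynomial.coeff_X_pow_mul', coeff_toUni]

theorem degreeOf_le_of_coeffWrt_eq_zero {i : σ} {D : ℕ} {f : MvPolynomial σ K}
    (h : ∀ d, D < d → coeffWrt i d f = 0) : degreeOf i f ≤ D := by
  rw [← natDegree_toUni, Polynomial.natDegree_le_iff_coeff_eq_zero]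
  exact fun d hd => (coeff_toUni i d f).trans (h d (by exact_mod_cast hd))

-- Each step cancels the coefficient of `X y ^ (D + 1)` and lowers the degree bound by one.
theorem exists_isPrem_of_degreeOf_le {y : σ} {Q : MvPolynomial σ K} (hQ : 0 < degreeOf y Q)
    (D : ℕ) :
    ∀ P : MvPolynomial σ K, degreeOf y P ≤ D →
      ∃ A R, initialWrt y Q ^ (D + 1 - degreeOf y Q) * P = A * Q + R ∧
        degreeOf y R < degreeOf y Q := by
  induction D with
  | zero =>
    exact fun P hP => ⟨0, P, by rw [Nat.sub_eq_zero_of_le hQ]; ring, by omega⟩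
  | succ D ih =>
    intro P hP
    set d := degreeOf y Q
    set h := initialWrt y Q
    by_cases hD : D + 1 < d
    · exact ⟨0, P, by rw [Nat.sub_eq_zero_of_le hD]; ring, by omega⟩
    set c := coeffWrt y (D + 1) P
    set k := D + 1 - d
    have hh : degreeOf y h = 0 := degreeOf_coeffWrt_self ..
    have hc : degreeOf y c = 0 := degreeOf_coeffWrt_self ..
    have hdeg : degreeOf y (h * P - c * (X y ^ k * Q)) ≤ D := by
      refine degreeOf_le_of_coeffWrt_eq_zero fun e he => ?_
      rw [coeffWrt_sub, coeffWrt_mul_left hh, coeffWrt_mul_left hc, coeffWrt_X_pow_mul,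
        if_pos (by omega)]
      rcases (Nat.succ_le_of_lt he).eq_or_lt with rfl | he
      · rw [show D + 1 - k = d by omega]
        exact sub_eq_zero.mpr (mul_comm _ _)
      · rw [coeffWrt_eq_zero_of_degreeOf_lt (by omega),
          coeffWrt_eq_zero_of_degreeOf_lt (f := Q) (by omega)]
        ring
    obtain ⟨A, R, hAR, hR⟩ := ih _ hdeg
    refine ⟨A + h ^ (D + 1 - d) * c * X y ^ k, R, ?_, hR⟩
    rw [show D + 1 + 1 - d = D + 1 - d + 1 by omega]
    linear_combination hAR

theorem exists_isPrem {y : σ} {Q : MvPolynomial σ K} (hQ : 0 < degreeOf y Q)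
    (P : MvPolynomial σ K) : ∃ R, IsPrem y Q P R :=
  let ⟨A, R, hAR, hR⟩ := exists_isPrem_of_degreeOf_le hQ _ P le_rfl
  ⟨R, A, hAR, hR⟩

/-- Pseudo-division acts coefficientwise in a variable `z` not occurring in the divisor `Q`, and
a multiple of `Q` of lower degree than `Q` in `y` vanishes. -/
theorem IsPrem.degreeOf_le {y z : σ} {Q P R : MvPolynomial σ K} (h : IsPrem y Q P R)
    (hz : degreeOf z Q = 0) : degreeOf z R ≤ degreeOf z P := by
  obtain ⟨A, hA, hR⟩ := h
  refine degreeOf_le_of_coeffWrt_eq_zero fun e he => ?_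
  have hcoeff := congrArg (coeffWrt z e) hA
  rw [coeffWrt_mul_left (degreeOf_pow_eq_zero (degreeOf_initialWrt_eq_zero y hz) _),
    coeffWrt_eq_zero_of_degreeOf_lt he, mul_zero, coeffWrt_add,
    mul_comm, coeffWrt_mul_left hz] at hcoeff
  refine eq_zero_of_dvd_of_degreeOf_lt (y := y) (Q := Q) ⟨-coeffWrt z e A, ?_⟩
    ((degreeOf_coeffWrt_le ..).trans_lt hR)
  linear_combination -hcoeff

theorem IterPrem.degreeOf_le {L : List (σ × MvPolynomial σ K)} {P R : MvPolynomial σ K} {z : σ}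
    (h : IterPrem P L R) (hz : ∀ e ∈ L, degreeOf z e.2 = 0) : degreeOf z R ≤ degreeOf z P := by
  induction L generalizing P with
  | nil => exact (congrArg (degreeOf z) h).le
  | cons e L ih =>
    obtain ⟨S, hS, hR⟩ := h
    exact (ih hR fun e' he' => hz e' (List.mem_cons_of_mem e he')).trans
      (hS.degreeOf_le (hz e List.mem_cons_self))

/-- The later divisors are free of the variable of an earlier one, so by `IterPrem.degreeOf_le`
they keep the remainder reduced in that variable. -/
theorem exists_iterPrem_of_pairwise {L : List (σ × MvPolynomial σ K)}
    (hpos : ∀ e ∈ L, 0 < degreeOf e.1 e.2)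
    (hfree : L.Pairwise fun e e' => degreeOf e.1 e'.2 = 0) (P : MvPolynomial σ K) :
    ∃ R, IterPrem P L R ∧ ∀ e ∈ L, degreeOf e.1 R < degreeOf e.1 e.2 := by
  induction L generalizing P with
  | nil => exact ⟨P, rfl, by simp⟩
  | cons e L ih =>
    rw [List.pairwise_cons] at hfree
    obtain ⟨S, hS⟩ := exists_isPrem (hpos e List.mem_cons_self) P
    obtain ⟨R, hR, hred⟩ := ih (fun e' he' => hpos e' (List.mem_cons_of_mem e he')) hfree.2 S
    refine ⟨R, ⟨S, hS, hR⟩, List.forall_mem_cons.mpr ⟨?_, hred⟩⟩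
    obtain ⟨_, _, hSe⟩ := hS
    exact (hR.degreeOf_le hfree.1).trans_lt hSe

theorem coeffWrt_mem_span {y : σ} {S : Set (MvPolynomial σ K)} (hS : ∀ s ∈ S, degreeOf y s = 0)
    {g : MvPolynomial σ K} (hg : g ∈ Ideal.span S) (d : ℕ) : coeffWrt y d g ∈ Ideal.span S := by
  induction hg using Submodule.span_induction generalizing d with
  | mem s hs =>
    rw [← coeff_toUni, toUni_of_degreeOf_eq_zero (hS s hs), Polynomial.coeff_C]
    split_ifs
    exacts [Ideal.subset_span hs, zero_mem _]
  | zero =>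
    rw [← coeff_toUni, toUni, map_zero, Polynomial.coeff_zero]
    exact zero_mem _
  | add g g' _ _ hg hg' => exact coeffWrt_add y d g g' ▸ add_mem (hg d) (hg' d)
  | smul a g _ hg =>
    rw [smul_eq_mul, ← coeff_toUni, toUni_mul, Polynomial.coeff_mul]
    refine sum_mem fun e _ => Ideal.mul_mem_left _ _ ?_
    rw [coeff_toUni]
    exact hg e.2

theorem coeffWrt_mem_satBy {y : σ} {S : Set (MvPolynomial σ K)} {J : MvPolynomial σ K}
    (hS : ∀ s ∈ S, degreeOf y s = 0) (hJ : degreeOf y J = 0) {g : MvPolynomial σ K}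
    (hg : g ∈ satBy (Ideal.span S) J) (d : ℕ) : coeffWrt y d g ∈ satBy (Ideal.span S) J := by
  obtain ⟨k, hk⟩ := hg
  exact ⟨k, coeffWrt_mul_left (degreeOf_pow_eq_zero hJ k) d g ▸ coeffWrt_mem_span hS hk d⟩

theorem mem_satBy_iff_forall_coeffWrt_mem {y : σ} {S : Set (MvPolynomial σ K)}
    {J : MvPolynomial σ K} (hS : ∀ s ∈ S, degreeOf y s = 0) (hJ : degreeOf y J = 0)
    {g : MvPolynomial σ K} :
    g ∈ satBy (Ideal.span S) J ↔ ∀ d, coeffWrt y d g ∈ satBy (Ideal.span S) J := by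
  refine ⟨coeffWrt_mem_satBy hS hJ, fun h => ?_⟩
  rw [← sum_coeffWrt_mul_X_pow y g]
  exact sum_mem fun d _ => Ideal.mul_mem_right _ _ (h d)

theorem map_toUni_eq_zero_iff {y : σ} {S : Set (MvPolynomial σ K)} {J : MvPolynomial σ K}
    (hS : ∀ s ∈ S, degreeOf y s = 0) (hJ : degreeOf y J = 0) {g : MvPolynomial σ K} :
    (toUni y g).map (Ideal.Quotient.mk (satBy (Ideal.span S) J)) = 0 ↔
      g ∈ satBy (Ideal.span S) J := by
  simp only [Polynomial.ext_iff, Polynomial.coeff_map, Polynomial.coeff_zero,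
    Ideal.Quotient.eq_zero_iff_mem, coeff_toUni]
  exact (mem_satBy_iff_forall_coeffWrt_mem hS hJ).symm

theorem exists_coeffWrt_notMem_satBy {y : σ} {S : Set (MvPolynomial σ K)}
    {J h ρ : MvPolynomial σ K} (hS : ∀ s ∈ S, degreeOf y s = 0) (hJ : degreeOf y J = 0)
    (hh : degreeOf y h = 0) (hρ : ρ ∉ satBy (Ideal.span S) J)
    (hhρ : h * ρ ∈ satBy (Ideal.span S) J) :
    ∃ d, coeffWrt y d ρ ∉ satBy (Ideal.span S) J ∧ h * coeffWrt y d ρ ∈ satBy (Ideal.span S) J := by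
  rw [mem_satBy_iff_forall_coeffWrt_mem hS hJ, not_forall] at hρ
  obtain ⟨d, hd⟩ := hρ
  exact ⟨d, hd, coeffWrt_mul_left hh d ρ ▸ coeffWrt_mem_satBy hS hJ hhρ d⟩

theorem exists_free_of_notMem_satBy {S : Set (MvPolynomial σ K)} {J h : MvPolynomial σ K}
    (V : List σ)
    (hV : ∀ v ∈ V, (∀ s ∈ S, degreeOf v s = 0) ∧ degreeOf v J = 0 ∧ degreeOf v h = 0)
    {ρ : MvPolynomial σ K} (hρ : ρ ∉ satBy (Ideal.span S) J)
    (hhρ : h * ρ ∈ satBy (Ideal.span S) J) :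
    ∃ τ, τ ∉ satBy (Ideal.span S) J ∧ h * τ ∈ satBy (Ideal.span S) J ∧
      (∀ v ∈ V, degreeOf v τ = 0) ∧ ∀ z, degreeOf z τ ≤ degreeOf z ρ := by
  induction V generalizing ρ with
  | nil => exact ⟨ρ, hρ, hhρ, by simp, fun _ => le_rfl⟩
  | cons v V ih =>
    obtain ⟨hS, hJ, hh⟩ := hV v List.mem_cons_self
    obtain ⟨d, hd, hhd⟩ := exists_coeffWrt_notMem_satBy hS hJ hh hρ hhρ
    obtain ⟨τ, hτ, hhτ, hfree, hle⟩ :=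
      ih (fun v' hv' => hV v' (List.mem_cons_of_mem v hv')) hd hhd
    refine ⟨τ, hτ, hhτ, List.forall_mem_cons.mpr ⟨?_, hfree⟩,
      fun z => (hle z).trans (degreeOf_coeffWrt_le ..)⟩
    exact Nat.le_zero.mp ((hle v).trans (degreeOf_coeffWrt_self ..).le)

/-- Modulo the saturated ideal, `f` has a regular leading coefficient in `y`, so it divides no
nonzero polynomial of lower degree in `y`. -/
theorem mem_satBy_of_mem_satBy_insert {y : σ} {S : Set (MvPolynomial σ K)}
    {J f p : MvPolynomial σ K} (hS : ∀ s ∈ S, degreeOf y s = 0) (hJ : degreeOf y J = 0)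
    (hreg : ∀ q, initialWrt y f * q ∈ satBy (Ideal.span S) J → q ∈ satBy (Ideal.span S) J)
    (hp : degreeOf y p < degreeOf y f)
    (hmem : p ∈ satBy (Ideal.span (insert f S)) (J * initialWrt y f)) :
    p ∈ satBy (Ideal.span S) J := by
  set 𝔞 := satBy (Ideal.span S) J
  set h := initialWrt y f
  obtain ⟨k, hk⟩ := hmem
  obtain ⟨q, u, hu, hpq⟩ := Ideal.mem_span_insert.mp hk
  have hJh : degreeOf y ((J * h) ^ k) = 0 :=
    degreeOf_pow_eq_zero (degreeOf_mul_eq_zero hJ (degreeOf_initialWrt_self y f)) k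
  have hprod : (toUni y q).map (Ideal.Quotient.mk 𝔞) * (toUni y f).map (Ideal.Quotient.mk 𝔞) =
      (toUni y ((J * h) ^ k * p)).map (Ideal.Quotient.mk 𝔞) := by
    rw [hpq, toUni_add, Polynomial.map_add, (map_toUni_eq_zero_iff hS hJ).mpr
      (mem_satBy_of_mem hu), add_zero, toUni_mul, Polynomial.map_mul]
  have hq : (toUni y q).map (Ideal.Quotient.mk 𝔞) = 0 := by
    refine Polynomial.eq_zero_of_natDegree_mul_lt (b := (toUni y f).map (Ideal.Quotient.mk 𝔞))
      (d := degreeOf y f) ?_ ?_ ?_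
    · exact (Polynomial.natDegree_map_le ..).trans (natDegree_toUni y f).le
    · intro x hx
      obtain ⟨r, rfl⟩ := Ideal.Quotient.mk_surjective x
      rw [Polynomial.coeff_map, coeff_toUni, ← map_mul, Ideal.Quotient.eq_zero_iff_mem] at hx
      exact Ideal.Quotient.eq_zero_iff_mem.mpr (hreg r (mul_comm r h ▸ hx))
    · rw [hprod]
      refine (Polynomial.natDegree_map_le ..).trans_lt ?_
      rw [natDegree_toUni]
      exact ((degreeOf_mul_le ..).trans (by rw [hJh, zero_add])).trans_lt hp
  rw [hq, zero_mul, eq_comm, map_toUni_eq_zero_iff hS hJ, mul_pow, mul_comm (J ^ k),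
    mul_assoc] at hprod
  exact mem_satBy_of_dvd_pow_of_mul_mem (dvd_refl _) (Ideal.mem_of_pow_mul_mem hreg k hprod)

end Univariate

section TriangularSets

variable [LinearOrder σ]

theorem HasLV.degreeOf_pos {f : MvPolynomial σ K} {i : σ} (h : HasLV f i) : 0 < degreeOf i f :=
  Nat.pos_of_ne_zero (mem_vars_iff_degreeOf_ne_zero.mp h.1)

theorem HasLV.degreeOf_eq_zero {f : MvPolynomial σ K} {i z : σ} (h : HasLV f i) (hz : i < z) :
    degreeOf z f = 0 := by
  by_contra hne
  exact absurd (h.2 z (mem_vars_iff_degreeOf_ne_zero.mpr hne)) (not_le.mpr hz)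

theorem IterPrem.mul_mem_sat_iff {T : TriSet K σ} {F R : MvPolynomial σ K}
    (h : IterPrem F T.elems.reverse R) (x : MvPolynomial σ K) :
    x * F ∈ T.sat ↔ x * R ∈ T.sat := by
  refine h.mul_mem_satBy_iff (I := T.ideal) (J := T.prodInit) (fun e he => ?_) x
  rw [List.mem_reverse] at he
  exact ⟨Ideal.subset_span ⟨e, he, rfl⟩, List.dvd_prod (List.mem_map_of_mem he)⟩

namespace TriSet

theorem degreeOf_pos {T : TriSet K σ} {e : σ × MvPolynomial σ K} (he : e ∈ T.elems) :
    0 < degreeOf e.1 e.2 :=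
  (T.hlv e he).degreeOf_pos

theorem degreeOf_eq_zero_of_forall_lt {T : TriSet K σ} {z : σ} (hz : ∀ e ∈ T.elems, e.1 < z) :
    (∀ s ∈ {p | ∃ e ∈ T.elems, p = e.2}, degreeOf z s = 0) ∧ degreeOf z T.prodInit = 0 := by
  refine ⟨fun s ⟨e, he, hs⟩ => hs ▸ (T.hlv e he).degreeOf_eq_zero (hz e he), ?_⟩
  refine degreeOf_list_prod_eq_zero fun a ha => ?_
  obtain ⟨e, he, rfl⟩ := List.mem_map.mp ha
  exact degreeOf_initialWrt_eq_zero _ ((T.hlv e he).degreeOf_eq_zero (hz e he))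

theorem exists_iterPrem_reduced (T : TriSet K σ) (F : MvPolynomial σ K) :
    ∃ R, IterPrem F T.elems.reverse R ∧ ∀ e ∈ T.elems, degreeOf e.1 R < degreeOf e.1 e.2 := by
  have hfree : T.elems.reverse.Pairwise fun e e' => degreeOf e.1 e'.2 = 0 :=
    List.pairwise_reverse.mpr <| T.sorted.imp_of_mem fun ha _ hab =>
      (T.hlv _ ha).degreeOf_eq_zero hab
  obtain ⟨R, hR, hred⟩ := exists_iterPrem_of_pairwise
    (fun e he => degreeOf_pos (List.mem_reverse.mp he)) hfree F
  exact ⟨R, hR, fun e he => hred e (List.mem_reverse.mpr he)⟩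

theorem mem_sat_of_iterPrem_zero {T : TriSet K σ} {F : MvPolynomial σ K}
    (h : IterPrem F T.elems.reverse 0) : F ∈ T.sat := by
  simpa using (h.mul_mem_sat_iff 1).mpr (by simp)

theorem not_iterPrem_zero_of_reduced {T : TriSet K σ} {τ : MvPolynomial σ K} (hτ : τ ≠ 0)
    (hred : ∀ e ∈ T.elems, degreeOf e.1 τ < degreeOf e.1 e.2) :
    ¬ IterPrem τ T.elems.reverse 0 := fun h =>
  hτ ((iterPrem_of_degreeOf_lt fun e he => hred e (List.mem_reverse.mp he)).unique h)

theorem take_of_length_le {T : TriSet K σ} {i : ℕ} (h : T.elems.length ≤ i) : T.take i = T := by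
  obtain ⟨elems, _, _⟩ := T
  simp only [take, List.take_of_length_le h]

theorem take_succ_elems (T : TriSet K σ) {i : ℕ} (hi : i < T.elems.length) :
    (T.take (i + 1)).elems = (T.take i).elems ++ [T.elems[i]] :=
  List.take_succ_eq_append_getElem hi

theorem ideal_take_succ (T : TriSet K σ) {i : ℕ} (hi : i < T.elems.length) :
    (T.take (i + 1)).ideal =
      Ideal.span (insert T.elems[i].2 {p | ∃ e ∈ (T.take i).elems, p = e.2}) := by
  rw [ideal, take_succ_elems T hi]
  congr 1
  ext p
  simp [or_comm]

theorem prodInit_take_succ (T : TriSet K σ) {i : ℕ} (hi : i < T.elems.length) :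
    (T.take (i + 1)).prodInit =
      (T.take i).prodInit * initialWrt T.elems[i].1 T.elems[i].2 := by
  simp [prodInit, take_succ_elems T hi]

theorem ideal_take_le (T : TriSet K σ) (i : ℕ) : (T.take i).ideal ≤ T.ideal :=
  Ideal.span_mono fun _ ⟨e, he, hp⟩ => ⟨e, List.mem_of_mem_take he, hp⟩

theorem prodInit_take_dvd (T : TriSet K σ) (i : ℕ) : (T.take i).prodInit ∣ T.prodInit :=
  ⟨((T.elems.drop i).map fun e => initialWrt e.1 e.2).prod, by
    rw [prodInit, prodInit, take, ← List.prod_append, ← List.map_append, List.take_append_drop]⟩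

theorem lv_lt_of_mem_take_of_mem_drop (T : TriSet K σ) {i : ℕ} {a b : σ × MvPolynomial σ K}
    (ha : a ∈ T.elems.take i) (hb : b ∈ T.elems.drop i) : a.1 < b.1 := by
  have hsort := T.sorted
  rw [← List.take_append_drop i T.elems, List.pairwise_append] at hsort
  exact hsort.2.2 a ha b hb

theorem lv_lt_of_mem_take (T : TriSet K σ) {i : ℕ} (hi : i < T.elems.length)
    {a : σ × MvPolynomial σ K} (ha : a ∈ (T.take i).elems) : a.1 < T.elems[i].1 :=
  T.lv_lt_of_mem_take_of_mem_drop ha (List.drop_eq_getElem_cons hi ▸ List.mem_cons_self)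

theorem lv_le_of_mem_drop (T : TriSet K σ) {i : ℕ} (hi : i < T.elems.length)
    {b : σ × MvPolynomial σ K} (hb : b ∈ T.elems.drop i) : T.elems[i].1 ≤ b.1 := by
  rw [List.drop_eq_getElem_cons hi, List.mem_cons] at hb
  rcases hb with rfl | hb
  · exact le_rfl
  · refine (T.lv_lt_of_mem_take_of_mem_drop ?_ hb).le
    rw [List.take_succ_eq_append_getElem hi]
    exact List.mem_append_right _ (List.mem_singleton_self _)

theorem degreeOf_initialWrt_eq_zero_of_mem_drop (T : TriSet K σ) {i : ℕ}
    (hi : i < T.elems.length) {b : σ × MvPolynomial σ K} (hb : b ∈ T.elems.drop i) :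
    degreeOf b.1 (initialWrt T.elems[i].1 T.elems[i].2) = 0 := by
  rcases (T.lv_le_of_mem_drop hi hb).eq_or_lt with heq | hlt
  · rw [← heq]
    exact degreeOf_initialWrt_self ..
  · exact degreeOf_initialWrt_eq_zero _ ((T.hlv _ (List.getElem_mem hi)).degreeOf_eq_zero hlt)

theorem eq_zero_of_mem_sat_take {T : TriSet K σ} (hT : T.Regular) (i : ℕ)
    {p : MvPolynomial σ K} (hp : p ∈ (T.take i).sat)
    (hred : ∀ e ∈ (T.take i).elems, degreeOf e.1 p < degreeOf e.1 e.2) : p = 0 := by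
  induction i with
  | zero =>
    obtain ⟨k, hk⟩ := hp
    simpa [take, prodInit, ideal] using hk
  | succ i ih =>
    by_cases hi : i < T.elems.length
    · rw [take_succ_elems T hi, List.forall_mem_append, List.forall_mem_singleton] at hred
      refine ih ?_ hred.1
      obtain ⟨hS, hJ⟩ := degreeOf_eq_zero_of_forall_lt fun e he => T.lv_lt_of_mem_take hi he
      have hreg := (hT i hi).2
      simp only [List.get_eq_getElem] at hreg
      refine mem_satBy_of_mem_satBy_insert hS hJ hreg hred.2 ?_
      rw [← ideal_take_succ T hi, ← prodInit_take_succ T hi]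
      exact hp
    · have hT' : T.take (i + 1) = T.take i := by
        rw [take_of_length_le (by omega), take_of_length_le (by omega)]
      rw [hT'] at hp hred
      exact ih hp hred

theorem iterPrem_zero_of_mem_sat {T : TriSet K σ} (hT : T.Regular) {F : MvPolynomial σ K}
    (hF : F ∈ T.sat) : IterPrem F T.elems.reverse 0 := by
  obtain ⟨R, hR, hred⟩ := T.exists_iterPrem_reduced F
  have hRsat : R ∈ T.sat := by simpa using (hR.mul_mem_sat_iff 1).mp (by simpa using hF)
  have hT' : T.take T.elems.length = T := take_of_length_le le_rfl
  have hR0 := eq_zero_of_mem_sat_take hT T.elems.length (p := R) (by rwa [hT']) (by rwa [hT'])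
  rwa [← hR0]

theorem mem_sat_of_initial_mul_mem_sat_take {T : TriSet K σ} {i : ℕ} (hi : i < T.elems.length)
    {τ : MvPolynomial σ K} (h : initialWrt T.elems[i].1 T.elems[i].2 * τ ∈ (T.take i).sat) :
    τ ∈ T.sat := by
  obtain ⟨m, hm⟩ := h
  set J' := (T.take i).prodInit
  set h := initialWrt T.elems[i].1 T.elems[i].2
  have hdvd : J' ^ m * h ∣ T.prodInit ^ (m + 1) := by
    refine dvd_trans ?_ (pow_dvd_pow_of_dvd (prodInit_take_succ T hi ▸ T.prodInit_take_dvd _) _)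
    exact ⟨J' * h ^ m, by ring⟩
  refine mem_satBy_of_dvd_pow_of_mul_mem hdvd (mem_satBy_of_mem (T.ideal_take_le i ?_))
  rwa [mul_assoc]

theorem exists_mem_sat_not_iterPrem_zero {T : TriSet K σ} (hT : ¬ T.Regular) :
    ∃ F ∈ T.sat, ¬ IterPrem F T.elems.reverse 0 := by
  simp only [Regular, List.get_eq_getElem, not_forall, not_and_or, not_not, exists_prop]
    at hT
  obtain ⟨i, hi, hbad⟩ := hT
  set h := initialWrt T.elems[i].1 T.elems[i].2
  suffices ∃ τ ≠ 0, h * τ ∈ (T.take i).sat ∧ ∀ e ∈ T.elems, degreeOf e.1 τ < degreeOf e.1 e.2 by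
    obtain ⟨τ, hτ, hmem, hred⟩ := this
    exact ⟨τ, mem_sat_of_initial_mul_mem_sat_take hi hmem, not_iterPrem_zero_of_reduced hτ hred⟩
  rcases hbad with hini | ⟨p, hp, hpn⟩
  · refine ⟨1, one_ne_zero, by rwa [mul_one], fun e he => ?_⟩
    rw [degreeOf_one]
    exact degreeOf_pos he
  obtain ⟨ρ, hρ, hred⟩ := (T.take i).exists_iterPrem_reduced p
  have hρn : ρ ∉ (T.take i).sat := by simpa using (hρ.mul_mem_sat_iff 1).not.mp (by simpa)
  have hhρ : h * ρ ∈ (T.take i).sat := (hρ.mul_mem_sat_iff h).mp hp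
  have hV : ∀ v ∈ (T.elems.drop i).map Prod.fst,
      (∀ s ∈ {p | ∃ e ∈ (T.take i).elems, p = e.2}, degreeOf v s = 0) ∧
        degreeOf v (T.take i).prodInit = 0 ∧ degreeOf v h = 0 := by
    intro v hv
    obtain ⟨b, hb, rfl⟩ := List.mem_map.mp hv
    obtain ⟨hS, hJ⟩ := degreeOf_eq_zero_of_forall_lt (T := T.take i) fun e he =>
      T.lv_lt_of_mem_take_of_mem_drop he hb
    exact ⟨hS, hJ, T.degreeOf_initialWrt_eq_zero_of_mem_drop hi hb⟩
  obtain ⟨τ, hτ, hhτ, hfree, hle⟩ := exists_free_of_notMem_satBy _ hV hρn hhρ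
  refine ⟨τ, fun h0 => hτ (h0 ▸ zero_mem _), hhτ, fun e he => ?_⟩
  rw [← List.take_append_drop i T.elems, List.mem_append] at he
  rcases he with he | he
  · exact (hle _).trans_lt (hred e he)
  · rw [hfree e.1 (List.mem_map_of_mem he)]
    exact degreeOf_pos (List.mem_of_mem_drop he)

theorem regular_iff_iterPrem_zero_eq_sat (T : TriSet K σ) :
    T.Regular ↔ {F : MvPolynomial σ K | IterPrem F T.elems.reverse 0} = ↑T.sat := by
  refine ⟨fun hT => Set.ext fun F => ⟨mem_sat_of_iterPrem_zero, iterPrem_zero_of_mem_sat hT⟩,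
    fun h => by_contra fun hT => ?_⟩
  obtain ⟨F, hF, hnot⟩ := exists_mem_sat_not_iterPrem_zero hT
  exact hnot (h.symm ▸ hF : F ∈ {F | IterPrem F T.elems.reverse 0})

theorem not_regular_of_not_iterPrem_add {T : TriSet K σ} {P Q : MvPolynomial σ K}
    (hP : IterPrem P T.elems.reverse 0) (hQ : IterPrem Q T.elems.reverse 0)
    (hPQ : ¬ IterPrem (P + Q) T.elems.reverse 0) : ¬ T.Regular := fun hT =>
  hPQ (iterPrem_zero_of_mem_sat hT (add_mem (mem_sat_of_iterPrem_zero hP)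
    (mem_sat_of_iterPrem_zero hQ)))

end TriSet

end TriangularSets

section Counterexample

theorem toUni_X_one_mul_X_two_add_X_zero :
    toUni 2 (X 1 * X 2 + X 0 : MvPolynomial (Fin 3) ℚ) =
      Polynomial.C (X 1) * Polynomial.X + Polynomial.C (X 0) := by
  simp [toUni]

theorem degreeOf_X_one_mul_X_two_add_X_zero :
    degreeOf 2 (X 1 * X 2 + X 0 : MvPolynomial (Fin 3) ℚ) = 1 := by
  rw [← natDegree_toUni, toUni_X_one_mul_X_two_add_X_zero,
    Polynomial.natDegree_linear (X_ne_zero 1)]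

noncomputable def irregularTriSet : TriSet ℚ (Fin 3) where
  elems := [(1, X 1 ^ 2), (2, X 1 * X 2 + X 0)]
  sorted := by simp
  hlv := by
    simp only [List.mem_cons, List.not_mem_nil, or_false, forall_eq_or_imp, forall_eq]
    refine ⟨⟨mem_vars_iff_degreeOf_ne_zero.mpr (by simp), fun j hj => ?_⟩,
      mem_vars_iff_degreeOf_ne_zero.mpr (by rw [degreeOf_X_one_mul_X_two_add_X_zero]; simp),
      fun j _ => Fin.le_last j⟩
    have hj' := vars_pow _ 2 hj
    rw [vars_X, Finset.mem_singleton] at hj'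
    exact hj'.le

theorem irregularTriSet_elems_reverse :
    irregularTriSet.elems.reverse = [(2, X 1 * X 2 + X 0), (1, X 1 ^ 2)] :=
  rfl

theorem iterPrem_X_one_mul_X_two_add_X_zero :
    IterPrem (X 1 * X 2 + X 0) irregularTriSet.elems.reverse 0 := by
  rw [irregularTriSet_elems_reverse]
  exact ⟨0, isPrem_self (by rw [degreeOf_X_one_mul_X_two_add_X_zero]; omega), 0,
    isPrem_of_degreeOf_lt (by simp), rfl⟩

theorem iterPrem_X_one_sub :
    IterPrem (X 1 - (X 1 * X 2 + X 0)) irregularTriSet.elems.reverse 0 := by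
  rw [irregularTriSet_elems_reverse]
  have hdeg : degreeOf 2 (X 1 - (X 1 * X 2 + X 0) : MvPolynomial (Fin 3) ℚ) = 1 := by
    have : toUni 2 (X 1 - (X 1 * X 2 + X 0) : MvPolynomial (Fin 3) ℚ) =
        Polynomial.C (-X 1) * Polynomial.X + Polynomial.C (X 1 - X 0) := by
      simp [toUni]
      ring
    rw [← natDegree_toUni, this, Polynomial.natDegree_linear (neg_ne_zero.mpr (X_ne_zero 1))]
  have hini : initialWrt 2 (X 1 * X 2 + X 0 : MvPolynomial (Fin 3) ℚ) = X 1 := by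
    rw [← leadingCoeff_toUni, toUni_X_one_mul_X_two_add_X_zero,
      Polynomial.leadingCoeff_linear (X_ne_zero 1)]
  refine ⟨X 1 ^ 2, ⟨-X 1, ?_, ?_⟩, 0, isPrem_self (by simp), rfl⟩
  · rw [hdeg, degreeOf_X_one_mul_X_two_add_X_zero, hini]
    ring
  · rw [degreeOf_X_one_mul_X_two_add_X_zero, ← natDegree_toUni]
    simp [toUni]

theorem not_iterPrem_X_one : ¬ IterPrem (X 1) irregularTriSet.elems.reverse 0 := by
  refine TriSet.not_iterPrem_zero_of_reduced (X_ne_zero 1) ?_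
  simp only [irregularTriSet, List.mem_cons, List.not_mem_nil, or_false, forall_eq_or_imp,
    forall_eq, degreeOf_X_one_mul_X_two_add_X_zero]
  simp [degreeOf_X]

end Counterexample

end CharDec

open CharDec MvPolynomial

/-- A triangular set `T` is regular if and only if
`{F : prem(F, T) = 0} = sat(T)`; and additivity of the set
`{F : prem(F, T) = 0}` fails in general for irregular triangular sets:
there are an irregular triangular set `T` and polynomials `P, Q` with
`prem(P, T) = 0` and `prem(Q, T) = 0` but `prem(P + Q, T) ≠ 0`. -/
theorem stmt_15 {K : Type*} [Field K] {n : ℕ} :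
    (∀ T : TriSet K (Fin n),
      (T.Regular ↔
        {F : MvPolynomial (Fin n) K | IterPrem F T.elems.reverse 0} = ↑T.sat)) ∧
    ∃ (T : TriSet ℚ (Fin 3)) (P Q : MvPolynomial (Fin 3) ℚ),
      ¬ T.Regular ∧
      IterPrem P T.elems.reverse 0 ∧ IterPrem Q T.elems.reverse 0 ∧
      ¬ IterPrem (P + Q) T.elems.reverse 0 := by
  have hsum : ¬ IterPrem (X 1 * X 2 + X 0 + (X 1 - (X 1 * X 2 + X 0)))
      irregularTriSet.elems.reverse 0 := by
    rw [add_sub_cancel]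
    exact not_iterPrem_X_one
  exact ⟨TriSet.regular_iff_iterPrem_zero_eq_sat, irregularTriSet, _, _,
    TriSet.not_regular_of_not_iterPrem_add iterPrem_X_one_mul_X_two_add_X_zero iterPrem_X_one_sub
      hsum,
    iterPrem_X_one_mul_X_two_add_X_zero, iterPrem_X_one_sub, hsum⟩
end

section
/- Let Ψ = {(G_1, C_1), ..., (G_t, C_t)} be a characteristic decomposition of a finite polynomial set F ⊆ K[x_1,...,x_n] and assume sat(C_i) = ⟨C_i⟩ for every i. Then the radical of ⟨F⟩ equals the intersection of the radicals of ⟨G_i⟩ over i = 1,...,t. -/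
open MvPolynomial

open CharDec MvPolynomial

theorem MvPolynomial.vanishingIdeal_iUnion {k K σ : Type*} [Field k] [Field K] [Algebra k K]
    {ι : Sort*} (V : ι → Set (σ → K)) :
    vanishingIdeal k (⋃ i, V i) = ⨅ i, vanishingIdeal k (V i) := by
  ext p
  simp only [mem_vanishingIdeal_iff, Ideal.mem_iInf, Set.mem_iUnion, forall_exists_index]
  exact forall_comm

namespace CharDec

variable {K σ : Type*} [Field K]

theorem zeroSet_eq_zeroLocus_span (S : Set (MvPolynomial σ K)) :
    zeroSet S = zeroLocus (AlgebraicClosure K) (Ideal.span S) :=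
  (zeroLocus_span S).symm

theorem radical_span_eq_vanishingIdeal_zeroSet [Finite σ] (S : Set (MvPolynomial σ K)) :
    (Ideal.span S).radical = vanishingIdeal K (zeroSet S) := by
  rw [zeroSet_eq_zeroLocus_span, vanishingIdeal_zeroLocus_eq_radical]

end CharDec

theorem stmt_18_general {K : Type*} [Field K] {n : ℕ}
    (F : Set (MvPolynomial (Fin n) K))
    (t : ℕ) (G : Fin t → Set (MvPolynomial (Fin n) K))
    (hz1 : zeroSet F = ⋃ i, zeroSet (G i)) :
    (Ideal.span F).radical = ⨅ i, (Ideal.span (G i)).radical := by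
  simp only [radical_span_eq_vanishingIdeal_zeroSet, hz1, vanishingIdeal_iUnion]

/-- Let `{(G_1, C_1), …, (G_t, C_t)}` be a characteristic
decomposition of a finite polynomial set `F` with `sat(C_i) = ⟨C_i⟩` for every
`i`. Then `√⟨F⟩ = ⋂ i, √⟨G_i⟩`. -/
theorem stmt_18 {K : Type*} [Field K] {n : ℕ}
    (F : Set (MvPolynomial (Fin n) K)) (hF : F.Finite)
    (t : ℕ) (G : Fin t → Set (MvPolynomial (Fin n) K))
    (C : Fin t → TriSet K (Fin n))
    (hpair : ∀ i, IsReducedGB (G i) (Ideal.span (G i)) ∧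
      IsWCharOf (C i) (G i) ∧ (C i).Normal)
    (hz1 : zeroSet F = ⋃ i, zeroSet (G i))
    (hz2 : zeroSet F = ⋃ i, (C i).zeroQuasi)
    (hz3 : zeroSet F = ⋃ i, zeroSet ((C i).sat : Set (MvPolynomial (Fin n) K)))
    (hsat : ∀ i, (C i).sat = (C i).ideal) :
    (Ideal.span F).radical = ⨅ i, (Ideal.span (G i)).radical :=
  stmt_18_general F t G hz1
end

section
/- In Q[x, y, z] with x < y < z and lex ordering, let G = {y², xz + y, yz, z²}. Then G is a reduced lex Gröbner basis, its W-characteristic set is C = [y², xz + y], the ideal ⟨G⟩ equals sat(C) = ⟨C⟩ : x^∞, but ⟨C⟩ ≠ sat(C). In particular, ⟨G⟩ = sat(C) does not imply sat(C) = ⟨C⟩. -/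
open MvPolynomial

open CharDec MvPolynomial

/-! In `ℚ[x, y, z]`, the substitution `x ↦ t`, `y ↦ -t ε`, `z ↦ ε` into the dual numbers over
`ℚ[t]` has kernel exactly `⟨G⟩`: the generators vanish, and conversely the quotient map onto
`ℚ[x, y, z] ⧸ ⟨G⟩` factors through it, since there `z² = 0` and `y = -x z`. The monomials
divisible by no leading monomial `y², xz, yz, z²` are `xᵃ`, `xᵃy` and `z`, and each is detected
by a coefficient of its image (`tᵃ`, `tᵃ⁺¹ε`, `ε`) that no lex-smaller monomial reaches; so no
nonzero element of `⟨G⟩` has such a leading monomial, which is the Gröbner property.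

As `t` is not a zero divisor in `ℚ[t][ε]`, `⟨G⟩` is saturated with respect to `x`; together with
`x · yz, x² · z² ∈ ⟨C⟩` this gives `⟨G⟩ = ⟨C⟩ : x^∞`. Finally `yz ∉ ⟨C⟩`, because the point
`(ε, -ε, 1)` over `ℚ[ε]` is a zero of `C` but not of `yz`. -/

namespace CharDec

variable {K : Type*} [Field K] {σ : Type*} [LinearOrder σ]

theorem lexLe_iff_toColex_le {a b : σ →₀ ℕ} : lexLe a b ↔ toColex a ≤ toColex b := by
  change _ ↔ (⇑a = ⇑b ∨ ∃ i, (∀ j, i < j → a j = b j) ∧ a i < b i)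
  rw [DFunLike.coe_fn_eq]
  exact or_congr_right ⟨fun ⟨i, h, h'⟩ => ⟨i, h', h⟩, fun ⟨i, h', h⟩ => ⟨i, h, h'⟩⟩

theorem lexLe.apply_top_le [OrderTop σ] {a b : σ →₀ ℕ} (h : lexLe a b) : a ⊤ ≤ b ⊤ := by
  rcases h with rfl | ⟨i, hi, h⟩
  · exact le_rfl
  · rcases eq_or_ne i ⊤ with rfl | hne
    · exact hi.le
    · exact (h ⊤ (lt_top_iff_ne_top.2 hne)).le

theorem IsLeadMon.eq {f : MvPolynomial σ K} {m m' : σ →₀ ℕ} (h : IsLeadMon f m)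
    (h' : IsLeadMon f m') : m = m' :=
  toColex.injective <| le_antisymm (lexLe_iff_toColex_le.1 (h'.2 m h.1))
    (lexLe_iff_toColex_le.1 (h.2 m' h'.1))

theorem exists_isLeadMon {f : MvPolynomial σ K} (hf : f ≠ 0) : ∃ m, IsLeadMon f m := by
  obtain ⟨m, hm, hmax⟩ := f.support.exists_max_image toColex (support_nonempty.2 hf)
  exact ⟨m, hm, fun m' hm' => lexLe_iff_toColex_le.2 (hmax m' hm')⟩

theorem isLeadMon_iff_of_support_eq_insert {f : MvPolynomial σ K} {a : σ →₀ ℕ}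
    {s : Finset (σ →₀ ℕ)} (hf : f.support = insert a s) (hs : ∀ b ∈ s, lexLe b a)
    {m : σ →₀ ℕ} : IsLeadMon f m ↔ m = a := by
  have ha : IsLeadMon f a := by
    refine ⟨by simp [hf], fun b hb => ?_⟩
    rw [hf, Finset.mem_insert] at hb
    rcases hb with rfl | hb
    exacts [Or.inl rfl, hs b hb]
  exact ⟨fun hm => hm.eq ha, fun h => h ▸ ha⟩

theorem IsLeadMon.linearMap_apply_ne_zero {f : MvPolynomial σ K} {m : σ →₀ ℕ}
    (hf : IsLeadMon f m) (L : MvPolynomial σ K →ₗ[K] K) (hm : L (monomial m 1) ≠ 0)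
    (hlt : ∀ m', lexLe m' m → m' ≠ m → L (monomial m' 1) = 0) : L f ≠ 0 := by
  have hsum : L f = ∑ m' ∈ f.support, f.coeff m' * L (monomial m' 1) := by
    conv_lhs => rw [f.as_sum]
    refine (map_sum L _ _).trans (Finset.sum_congr rfl fun m' _ => ?_)
    rw [show monomial m' (f.coeff m') = f.coeff m' • monomial m' 1 by
      rw [smul_monomial, smul_eq_mul, mul_one], L.map_smul, smul_eq_mul]
  rw [hsum, Finset.sum_eq_single_of_mem m hf.1
    fun m' hm' hne => by rw [hlt m' (hf.2 m' hm') hne, mul_zero]]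
  exact mul_ne_zero (mem_support_iff.1 hf.1) hm

theorem IsLeadMon.ne_zero {f : MvPolynomial σ K} {m : σ →₀ ℕ} (h : IsLeadMon f m) : f ≠ 0 :=
  fun h0 => by simpa [h0] using h.1

theorem isLeadMon_monomial_iff {a m : σ →₀ ℕ} {c : K} (hc : c ≠ 0) :
    IsLeadMon (monomial a c) m ↔ m = a :=
  isLeadMon_iff_of_support_eq_insert (s := ∅)
    (by classical rw [support_monomial, if_neg hc, Finset.insert_empty]) (by simp)

theorem lexLe_of_apply_top_lt [OrderTop σ] {a b : σ →₀ ℕ} (h : a ⊤ < b ⊤) : lexLe a b :=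
  Or.inr ⟨⊤, h, fun _ hj => absurd hj not_top_lt⟩

theorem HasLV.eq_top [OrderTop σ] {f : MvPolynomial σ K} {i : σ} (h : HasLV f i)
    (htop : ⊤ ∈ f.vars) : i = ⊤ :=
  top_le_iff.1 (h.2 ⊤ htop)

omit [LinearOrder σ] in
theorem le_satBy (I : Ideal (MvPolynomial σ K)) (J : MvPolynomial σ K) : I ≤ satBy I J :=
  fun p hp => ⟨0, by rwa [pow_zero, one_mul]⟩

end CharDec

namespace DualNumber
open TrivSqZeroExt
variable {R : Type*} [CommSemiring R]

theorem fst_inl_mul_eps_pow (a : R) (n : ℕ) :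
    (inl a * ε ^ n : R[ε]).fst = if n = 0 then a else 0 := by
  match n with
  | 0 => simp
  | 1 => simp
  | k + 2 => simp [pow_add]

theorem snd_inl_mul_eps_pow (a : R) (n : ℕ) :
    (inl a * ε ^ n : R[ε]).snd = if n = 1 then a else 0 := by
  match n with
  | 0 => simp
  | 1 => simp
  | k + 2 => simp [pow_add]

theorem eq_zero_of_inl_mul_eq_zero [NoZeroDivisors R] {r : R} (hr : r ≠ 0) {d : R[ε]}
    (h : inl r * d = 0) : d = 0 := by
  have h1 := congrArg fst h
  have h2 := congrArg snd h
  simp only [fst_mul, fst_inl, fst_zero, snd_mul, snd_inl, snd_zero, zero_mul, add_zero] at h1 h2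
  ext
  exacts [(mul_eq_zero.1 h1).resolve_left hr, (mul_eq_zero.1 h2).resolve_left hr]

end DualNumber

open scoped Polynomial
open TrivSqZeroExt DualNumber

theorem X_pow_mul_neg_X_pow {R : Type*} [CommRing R] (a b : ℕ) :
    (Polynomial.X ^ a * (-Polynomial.X) ^ b : R[X]) =
    Polynomial.C ((-1) ^ b) * Polynomial.X ^ (a + b) := by
  rw [neg_pow, Polynomial.C_pow, Polynomial.C_neg, Polynomial.C_1, pow_add]; ring

namespace XYZExample

noncomputable section

def exps (a b c : ℕ) : Fin 3 →₀ ℕ := Finsupp.equivFunOnFinite.symm ![a, b, c]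

@[simp] theorem coe_exps (a b c : ℕ) : ⇑(exps a b c) = ![a, b, c] := rfl

theorem exps_le_iff {a b c : ℕ} {m : Fin 3 →₀ ℕ} :
    exps a b c ≤ m ↔ a ≤ m 0 ∧ b ≤ m 1 ∧ c ≤ m 2 := by
  rw [Finsupp.le_def]
  exact ⟨fun h => ⟨h 0, h 1, h 2⟩, fun ⟨h0, h1, h2⟩ j => by fin_cases j <;> assumption⟩

theorem monomial_exps (a b c : ℕ) :
    monomial (exps a b c) (1 : ℚ) = X 0 ^ a * X 1 ^ b * X 2 ^ c := by
  rw [monomial_eq, C_1, one_mul, Finsupp.prod_fintype _ _ fun _ => pow_zero _,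
    Fin.prod_univ_three]
  rfl

theorem X1_sq_eq : (X 1 ^ 2 : MvPolynomial (Fin 3) ℚ) = monomial (exps 0 2 0) 1 := by
  rw [monomial_exps]; ring
theorem X0_mul_X2_add_X1_eq : (X 0 * X 2 + X 1 : MvPolynomial (Fin 3) ℚ) =
    monomial (exps 1 0 1) 1 + monomial (exps 0 1 0) 1 := by
  rw [monomial_exps, monomial_exps]; ring
theorem X1_mul_X2_eq : (X 1 * X 2 : MvPolynomial (Fin 3) ℚ) = monomial (exps 0 1 1) 1 := by
  rw [monomial_exps]; ring
theorem X2_sq_eq : (X 2 ^ 2 : MvPolynomial (Fin 3) ℚ) = monomial (exps 0 0 2) 1 := by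
  rw [monomial_exps]; ring

theorem exps_101_ne_exps_010 : exps 1 0 1 ≠ exps 0 1 0 := fun h => by
  simpa using DFunLike.congr_fun h 0

theorem support_X0_mul_X2_add_X1 :
    (X 0 * X 2 + X 1 : MvPolynomial (Fin 3) ℚ).support = {exps 1 0 1, exps 0 1 0} := by
  have hne := exps_101_ne_exps_010
  ext m
  simp only [X0_mul_X2_add_X1_eq, mem_support_iff, coeff_add, coeff_monomial, Finset.mem_insert,
    Finset.mem_singleton]
  split_ifs <;> simp_all [eq_comm]

def toDual : MvPolynomial (Fin 3) ℚ →ₐ[ℚ] ℚ[X][ε] :=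
  aeval ![inl Polynomial.X, inl (-Polynomial.X) * ε, ε]

theorem toDual_monomial (m : Fin 3 →₀ ℕ) : toDual (monomial m 1) =
    inl (Polynomial.X ^ m 0 * (-Polynomial.X) ^ m 1) * ε ^ (m 1 + m 2) := by
  rw [toDual, aeval_monomial, map_one, one_mul, Finsupp.prod_fintype _ _ fun _ => pow_zero _,
    Fin.prod_univ_three]
  change inl Polynomial.X ^ m 0 * (inl (-Polynomial.X) * ε) ^ m 1 * ε ^ m 2 = _
  rw [mul_pow, inl_pow, inl_pow, pow_add, inl_mul]
  ring

theorem coeff_fst_toDual_monomial (m : Fin 3 →₀ ℕ) (k : ℕ) :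
    (toDual (monomial m 1)).fst.coeff k =
      if m 1 + m 2 = 0 ∧ m 0 + m 1 = k then (-1) ^ m 1 else 0 := by
  rw [toDual_monomial, fst_inl_mul_eps_pow, X_pow_mul_neg_X_pow]
  by_cases h : m 1 + m 2 = 0
  · rw [if_pos h, Polynomial.coeff_C_mul_X_pow]
    simp [h, eq_comm]
  · rw [if_neg h, if_neg fun h' => h h'.1, Polynomial.coeff_zero]

theorem coeff_snd_toDual_monomial (m : Fin 3 →₀ ℕ) (k : ℕ) :
    (toDual (monomial m 1)).snd.coeff k =
      if m 1 + m 2 = 1 ∧ m 0 + m 1 = k then (-1) ^ m 1 else 0 := by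
  rw [toDual_monomial, snd_inl_mul_eps_pow, X_pow_mul_neg_X_pow]
  by_cases h : m 1 + m 2 = 1
  · rw [if_pos h, Polynomial.coeff_C_mul_X_pow]
    simp [h, eq_comm]
  · rw [if_neg h, if_neg fun h' => h h'.1, Polynomial.coeff_zero]

def gens : Set (MvPolynomial (Fin 3) ℚ) := {X 1 ^ 2, X 0 * X 2 + X 1, X 1 * X 2, X 2 ^ 2}

@[simp] theorem toDual_X0 : toDual (X 0) = inl Polynomial.X := aeval_X _ _
@[simp] theorem toDual_X1 : toDual (X 1) = inl (-Polynomial.X) * ε := aeval_X _ _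
@[simp] theorem toDual_X2 : toDual (X 2) = ε := aeval_X _ _

theorem toDual_eq_zero_of_mem_gens {g : MvPolynomial (Fin 3) ℚ} (hg : g ∈ gens) :
    toDual g = 0 := by
  rcases hg with rfl | rfl | rfl | rfl <;>
    simp only [map_add, map_mul, map_pow, toDual_X0, toDual_X1, toDual_X2, inl_neg]
  · linear_combination (inl Polynomial.X) ^ 2 * eps_mul_eps (R := ℚ[X])
  · ring
  · linear_combination -inl Polynomial.X * eps_mul_eps (R := ℚ[X])
  · exact eps_pow_two

theorem mem_span_gens_iff {f : MvPolynomial (Fin 3) ℚ} :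
    f ∈ Ideal.span gens ↔ toDual f = 0 := by
  refine ⟨fun hf => RingHom.mem_ker.1
    ((Ideal.span_le (I := RingHom.ker toDual)).2 (fun g hg => toDual_eq_zero_of_mem_gens hg) hf),
    fun hf => ?_⟩
  set q := Ideal.Quotient.mkₐ ℚ (Ideal.span gens)
  have hq : ∀ g ∈ gens, q g = 0 := fun g hg =>
    Ideal.Quotient.eq_zero_iff_mem.2 (Ideal.subset_span hg)
  let back : ℚ[X][ε] →ₐ[ℚ] MvPolynomial (Fin 3) ℚ ⧸ Ideal.span gens :=
    DualNumber.lift ⟨(Polynomial.aeval (q (X 0)), q (X 2)),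
      by rw [← map_mul, ← sq]; exact hq _ (by simp [gens]), fun _ => Commute.all _ _⟩
  have hback : back.comp toDual = q := by
    ext i : 1
    have hy := hq (X 0 * X 2 + X 1) (by simp [gens])
    rw [map_add, map_mul] at hy
    fin_cases i <;> simp [back]
    linear_combination -hy
  have hf' := DFunLike.congr_fun hback f
  rw [AlgHom.comp_apply, hf, map_zero] at hf'
  exact Ideal.Quotient.eq_zero_iff_mem.1 hf'.symm

theorem coeff_fst_toDual_ne_zero {f : MvPolynomial (Fin 3) ℚ} {m : Fin 3 →₀ ℕ}
    (hf : IsLeadMon f m) (hm : m 1 + m 2 = 0) : (toDual f).fst.coeff (m 0) ≠ 0 := by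
  refine hf.linearMap_apply_ne_zero
    (Polynomial.lcoeff ℚ (m 0) ∘ₗ (fstHom ℚ ℚ[X] ℚ[X]).toLinearMap ∘ₗ toDual.toLinearMap)
    ?_ fun m' _ hne => ?_
  · simp [coeff_fst_toDual_monomial, hm]
    omega
  · simp only [LinearMap.comp_apply, AlgHom.toLinearMap_apply, Polynomial.lcoeff_apply,
      fstHom_apply]
    rw [coeff_fst_toDual_monomial, if_neg]
    rintro ⟨h12, h01⟩
    exact hne (Finsupp.ext fun j => by fin_cases j <;> simp <;> omega)

theorem coeff_snd_toDual_ne_zero {f : MvPolynomial (Fin 3) ℚ} {m : Fin 3 →₀ ℕ}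
    (hf : IsLeadMon f m) (hm : m 1 + m 2 = 1) (hm' : m 2 = 0 ∨ m 0 = 0) :
    (toDual f).snd.coeff (m 0 + m 1) ≠ 0 := by
  refine hf.linearMap_apply_ne_zero (Polynomial.lcoeff ℚ (m 0 + m 1) ∘ₗ
    (sndHom ℚ[X] ℚ[X]).restrictScalars ℚ ∘ₗ toDual.toLinearMap) ?_ fun m' hle hne => ?_
  · simp [coeff_snd_toDual_monomial, hm]
  · -- `x ^ (a + 1) * z` reaches `t ^ (a + 1) * ε` as well, but it is lex-larger than `x ^ a * y`.
    have h2 : m' 2 ≤ m 2 := hle.apply_top_le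
    simp only [LinearMap.comp_apply, AlgHom.toLinearMap_apply, Polynomial.lcoeff_apply,
      LinearMap.coe_restrictScalars, sndHom_apply]
    rw [coeff_snd_toDual_monomial, if_neg]
    rintro ⟨h12, h01⟩
    exact hne (Finsupp.ext fun j => by fin_cases j <;> simp <;> omega)

theorem exps_le_of_isLeadMon_of_mem_span_gens {f : MvPolynomial (Fin 3) ℚ} {m : Fin 3 →₀ ℕ}
    (hf : f ∈ Ideal.span gens) (hm : IsLeadMon f m) :
    exps 0 2 0 ≤ m ∨ exps 1 0 1 ≤ m ∨ exps 0 1 1 ≤ m ∨ exps 0 0 2 ≤ m := by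
  have h0 : toDual f = 0 := mem_span_gens_iff.1 hf
  by_contra! h
  simp only [exps_le_iff] at h
  rcases Nat.eq_zero_or_pos (m 1 + m 2) with hm0 | hm0
  · exact coeff_fst_toDual_ne_zero hm hm0 (by simp [h0])
  · exact coeff_snd_toDual_ne_zero hm (by omega) (by omega) (by simp [h0])

theorem isLeadMon_X1_sq {m : Fin 3 →₀ ℕ} :
    IsLeadMon (X 1 ^ 2 : MvPolynomial (Fin 3) ℚ) m ↔ m = exps 0 2 0 := by
  rw [X1_sq_eq]; exact isLeadMon_monomial_iff one_ne_zero

theorem isLeadMon_X0_mul_X2_add_X1 {m : Fin 3 →₀ ℕ} :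
    IsLeadMon (X 0 * X 2 + X 1 : MvPolynomial (Fin 3) ℚ) m ↔ m = exps 1 0 1 :=
  isLeadMon_iff_of_support_eq_insert support_X0_mul_X2_add_X1
    (by simpa using lexLe_of_apply_top_lt (by decide))

theorem isLeadMon_X1_mul_X2 {m : Fin 3 →₀ ℕ} :
    IsLeadMon (X 1 * X 2 : MvPolynomial (Fin 3) ℚ) m ↔ m = exps 0 1 1 := by
  rw [X1_mul_X2_eq]; exact isLeadMon_monomial_iff one_ne_zero

theorem isLeadMon_X2_sq {m : Fin 3 →₀ ℕ} :
    IsLeadMon (X 2 ^ 2 : MvPolynomial (Fin 3) ℚ) m ↔ m = exps 0 0 2 := by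
  rw [X2_sq_eq]; exact isLeadMon_monomial_iff one_ne_zero

theorem isGB_gens : IsGB gens (Ideal.span gens) := by
  refine ⟨by simp [gens], Ideal.subset_span, fun f hf hne => ?_⟩
  obtain ⟨m, hm⟩ := exists_isLeadMon hne
  rcases exps_le_of_isLeadMon_of_mem_span_gens hf hm with h | h | h | h
  · exact ⟨_, by simp [gens], m, _, hm, isLeadMon_X1_sq.2 rfl, Finsupp.le_def.1 h⟩
  · exact ⟨_, by simp [gens], m, _, hm, isLeadMon_X0_mul_X2_add_X1.2 rfl, Finsupp.le_def.1 h⟩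
  · exact ⟨_, by simp [gens], m, _, hm, isLeadMon_X1_mul_X2.2 rfl, Finsupp.le_def.1 h⟩
  · exact ⟨_, by simp [gens], m, _, hm, isLeadMon_X2_sq.2 rfl, Finsupp.le_def.1 h⟩

theorem isReducedGB_gens : IsReducedGB gens (Ideal.span gens) := by
  refine ⟨isGB_gens, ?_, ?_, ?_⟩
  · rintro (h | h | h | h)
    exacts [(isLeadMon_X1_sq.2 rfl).ne_zero h.symm,
      (isLeadMon_X0_mul_X2_add_X1.2 rfl).ne_zero h.symm,
      (isLeadMon_X1_mul_X2.2 rfl).ne_zero h.symm, (isLeadMon_X2_sq.2 rfl).ne_zero h.symm]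
  · rintro g (rfl | rfl | rfl | rfl) m hm
    · rw [isLeadMon_X1_sq.1 hm, X1_sq_eq, coeff_monomial, if_pos rfl]
    · rw [isLeadMon_X0_mul_X2_add_X1.1 hm, X0_mul_X2_add_X1_eq]
      simp [coeff_monomial, exps_101_ne_exps_010.symm]
    · rw [isLeadMon_X1_mul_X2.1 hm, X1_mul_X2_eq, coeff_monomial, if_pos rfl]
    · rw [isLeadMon_X2_sq.1 hm, X2_sq_eq, coeff_monomial, if_pos rfl]
  · rintro g (rfl | rfl | rfl | rfl) g' (rfl | rfl | rfl | rfl) hne m hm m' hm' <;>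
      simp only [ne_eq, not_true_eq_false] at hne <;>
      simp only [isLeadMon_X1_sq, isLeadMon_X0_mul_X2_add_X1, isLeadMon_X1_mul_X2,
        isLeadMon_X2_sq] at hm' <;>
      subst hm' <;>
      simp only [X1_sq_eq, X1_mul_X2_eq, X2_sq_eq, support_X0_mul_X2_add_X1, support_monomial,
        one_ne_zero, if_false, Finset.mem_insert, Finset.mem_singleton] at hm <;>
      rcases hm with rfl | rfl <;>
      decide

theorem two_mem_vars_of_mem_gens {g : MvPolynomial (Fin 3) ℚ} (hg : g ∈ gens)
    (hg' : g ≠ X 1 ^ 2) : 2 ∈ g.vars := by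
  rcases hg with rfl | rfl | rfl | rfl
  · exact absurd rfl hg'
  · exact (mem_vars_iff_mem_support 2).2
      ⟨exps 1 0 1, by simp [support_X0_mul_X2_add_X1], by simp⟩
  · rw [X1_mul_X2_eq, vars_monomial one_ne_zero]; simp
  · rw [X2_sq_eq, vars_monomial one_ne_zero]; simp

theorem vars_X1_sq : (X 1 ^ 2 : MvPolynomial (Fin 3) ℚ).vars = {1} := by
  rw [X1_sq_eq, vars_monomial one_ne_zero]
  ext j; fin_cases j <;> simp

theorem isWCharOf_gens {C : TriSet ℚ (Fin 3)}
    (hC : C.elems = [(1, X 1 ^ 2), (2, X 0 * X 2 + X 1)]) : IsWCharOf C gens := by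
  refine ⟨fun e he => ?_, fun g hg i hi => ?_⟩
  · rw [hC, List.mem_pair] at he
    rcases he with rfl | rfl
    · refine ⟨by simp [gens], fun g hg _ mg me hmg hme => ?_⟩
      rw [isLeadMon_X1_sq.1 hme]
      rcases hg with rfl | rfl | rfl | rfl
      · rw [isLeadMon_X1_sq.1 hmg]; exact Or.inl rfl
      · rw [isLeadMon_X0_mul_X2_add_X1.1 hmg]; exact lexLe_of_apply_top_lt (by decide)
      · rw [isLeadMon_X1_mul_X2.1 hmg]; exact lexLe_of_apply_top_lt (by decide)
      · rw [isLeadMon_X2_sq.1 hmg]; exact lexLe_of_apply_top_lt (by decide)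
    · refine ⟨by simp [gens], fun g hg hlv mg me hmg hme => ?_⟩
      rw [isLeadMon_X0_mul_X2_add_X1.1 hme]
      rcases hg with rfl | rfl | rfl | rfl
      · exact absurd hlv.1 (by simp [vars_X1_sq])
      · rw [isLeadMon_X0_mul_X2_add_X1.1 hmg]; exact Or.inl rfl
      · rw [isLeadMon_X1_mul_X2.1 hmg]; exact Or.inr ⟨1, by decide, by decide⟩
      · rw [isLeadMon_X2_sq.1 hmg]; exact lexLe_of_apply_top_lt (by decide)
  · rw [TriSet.lvs, hC]
    by_cases hy : g = X 1 ^ 2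
    · subst hy
      have h1 : i = 1 := by simpa [vars_X1_sq] using hi.1
      simp [h1]
    · have h2 : i = 2 := hi.eq_top (two_mem_vars_of_mem_gens hg hy)
      simp [h2]

theorem initialWrt_X1_sq : initialWrt 1 (X 1 ^ 2 : MvPolynomial (Fin 3) ℚ) = 1 := by
  have hupd : (exps 0 2 0).update 1 0 = exps 0 0 0 := by
    ext j; fin_cases j <;> simp [Finsupp.update_apply]
  rw [initialWrt, coeffWrt, degreeOf_eq_sup, X1_sq_eq, support_monomial, if_neg one_ne_zero,
    Finset.sup_singleton, Finset.filter_singleton, if_pos rfl, Finset.sum_singleton,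
    coeff_monomial, if_pos rfl, hupd, monomial_exps]
  ring

theorem initialWrt_X0_mul_X2_add_X1 :
    initialWrt 2 (X 0 * X 2 + X 1 : MvPolynomial (Fin 3) ℚ) = X 0 := by
  have hupd : (exps 1 0 1).update 2 0 = exps 1 0 0 := by
    ext j; fin_cases j <;> simp [Finsupp.update_apply]
  rw [initialWrt, coeffWrt, degreeOf_eq_sup, support_X0_mul_X2_add_X1, X0_mul_X2_add_X1_eq]
  simp only [Finset.sup_insert, Finset.sup_singleton, Finset.filter_insert,
    Finset.filter_singleton]
  simp [coeff_monomial, exps_101_ne_exps_010.symm, hupd]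
  rw [monomial_exps]
  ring

def triIdeal : Ideal (MvPolynomial (Fin 3) ℚ) := Ideal.span {X 1 ^ 2, X 0 * X 2 + X 1}

theorem X1_mul_X2_mem_satBy : X 1 * X 2 ∈ satBy triIdeal (X 0) := by
  refine ⟨1, ?_⟩
  rw [pow_one, show (X 0 * (X 1 * X 2) : MvPolynomial (Fin 3) ℚ) =
    X 1 * (X 0 * X 2 + X 1) - X 1 ^ 2 by ring]
  exact sub_mem (Ideal.mul_mem_left _ _ (Ideal.subset_span (by simp)))
    (Ideal.subset_span (by simp))

theorem X2_sq_mem_satBy : X 2 ^ 2 ∈ satBy triIdeal (X 0) := by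
  refine ⟨2, ?_⟩
  rw [show (X 0 ^ 2 * X 2 ^ 2 : MvPolynomial (Fin 3) ℚ) =
    (X 0 * X 2 - X 1) * (X 0 * X 2 + X 1) + X 1 ^ 2 by ring]
  exact add_mem (Ideal.mul_mem_left _ _ (Ideal.subset_span (by simp)))
    (Ideal.subset_span (by simp))

theorem span_gens_eq_satBy : Ideal.span gens = satBy triIdeal (X 0) := by
  refine le_antisymm (Ideal.span_le.2 ?_) fun f ⟨k, hk⟩ => ?_
  · rintro g (rfl | rfl | rfl | rfl)
    · exact le_satBy _ _ (Ideal.subset_span (by simp))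
    · exact le_satBy _ _ (Ideal.subset_span (by simp))
    · exact X1_mul_X2_mem_satBy
    · exact X2_sq_mem_satBy
  · have hk' := mem_span_gens_iff.1 (Ideal.span_mono (by simp [gens, Set.insert_subset_iff]) hk)
    rw [map_mul, map_pow, toDual_X0, inl_pow] at hk'
    exact mem_span_gens_iff.2
      (eq_zero_of_inl_mul_eq_zero (pow_ne_zero _ Polynomial.X_ne_zero) hk')

theorem X1_mul_X2_not_mem_triIdeal : X 1 * X 2 ∉ triIdeal := by
  intro h
  have h0 := RingHom.mem_ker.1 <| (Ideal.span_le (I := RingHom.ker (aeval ![ε, -ε, 1] :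
    MvPolynomial (Fin 3) ℚ →ₐ[ℚ] ℚ[ε]))).2 (by rintro g (rfl | rfl) <;> simp) h
  simpa using congrArg snd h0

theorem triIdeal_ne_satBy : triIdeal ≠ satBy triIdeal (X 0) :=
  fun h => X1_mul_X2_not_mem_triIdeal (h ▸ X1_mul_X2_mem_satBy)

theorem ideal_eq_triIdeal {C : TriSet ℚ (Fin 3)}
    (hC : C.elems = [(1, X 1 ^ 2), (2, X 0 * X 2 + X 1)]) : C.ideal = triIdeal := by
  rw [TriSet.ideal, hC, triIdeal]
  congr 1
  ext p
  simp

theorem prodInit_eq_X0 {C : TriSet ℚ (Fin 3)}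
    (hC : C.elems = [(1, X 1 ^ 2), (2, X 0 * X 2 + X 1)]) : C.prodInit = X 0 := by
  rw [TriSet.prodInit, hC]
  simp [initialWrt_X1_sq, initialWrt_X0_mul_X2_add_X1]

theorem sat_eq_satBy {C : TriSet ℚ (Fin 3)}
    (hC : C.elems = [(1, X 1 ^ 2), (2, X 0 * X 2 + X 1)]) :
    C.sat = satBy triIdeal (X 0) := by
  rw [TriSet.sat, ideal_eq_triIdeal hC, prodInit_eq_X0 hC]

end
end XYZExample

open XYZExample

/-- In `ℚ[x, y, z]` (variables `0 < 1 < 2`) with lex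
ordering, `G = {y², xz + y, yz, z²}` is a reduced lex Gröbner basis, its
W-characteristic set is `C = [y², xz + y]`, `⟨G⟩ = sat(C) = ⟨C⟩ : x^∞`, but
`⟨C⟩ ≠ sat(C)`. -/
theorem stmt_19 (G : Set (MvPolynomial (Fin 3) ℚ)) (C : TriSet ℚ (Fin 3))
    (hGdef : G = {X 1 ^ 2, X 0 * X 2 + X 1, X 1 * X 2, X 2 ^ 2})
    (hCdef : C.elems = [(1, X 1 ^ 2), (2, X 0 * X 2 + X 1)]) :
    IsReducedGB G (Ideal.span G) ∧ IsWCharOf C G ∧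
    Ideal.span G = C.sat ∧ C.sat = satBy C.ideal (X 0) ∧
    C.ideal ≠ C.sat := by
  subst hGdef
  rw [sat_eq_satBy hCdef, ideal_eq_triIdeal hCdef]
  exact ⟨isReducedGB_gens, isWCharOf_gens hCdef, span_gens_eq_satBy, rfl, triIdeal_ne_satBy⟩
end
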